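/- Fix a prime p and an integer n with 0 < n < p/2, and let K be a field of characteristic p. Then H{n} and H{n−1}, viewed in K[λ], are coprime (they share no common root over the algebraic closure of K). -/

import Mathlib

open Polynomial Finset

/-- The Deuring polynomial `H{n}(λ) = ∑_{i=0}^n (n choose i)^2 λ^i`. -/
noncomputable def deuring (R : Type*) [CommRing R] (n : ℕ) : Polynomial R :=
  ∑ i ∈ Finset.range (n + 1), Polynomial.C ((n.choose i : R) ^ 2) * Polynomial.X ^ i

/-! The Deuring polynomials satisfy the three-term recurrence
`(m + 2) H_{m+2} = (2m + 3)(1 + λ) H_{m+1} - (m + 1)(1 - λ)² H_m`,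
so a common factor of `H_{m+2}` and `H_{m+1}` divides `(m + 1)(1 - λ)² H_m`. As long as
`2(m + 2) < p`, the constants `m + 1` and `m + 2` are units of `K`, and `1 - λ` is prime to
`H_{m+1}` because `H_{m+1}(1) = binom(2m + 2, m + 1)` is prime to `p`. Induction from `H_0 = 1`. -/

section ChooseCast

variable {F : Type*} [Field F] [CharZero F]

theorem Nat.cast_choose_succ_right (n k : ℕ) :
    (n.choose (k + 1) : F) = n.choose k * (n - k) / (k + 1) := by
  rw [eq_div_iff k.cast_add_one_ne_zero]
  rcases le_or_gt k n with h | h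
  · rw [← Nat.cast_sub h]
    exact_mod_cast Nat.choose_succ_right_eq n k
  · simp [Nat.choose_eq_zero_of_lt h, Nat.choose_eq_zero_of_lt (h.trans k.lt_succ_self)]

theorem Nat.cast_succ_choose_succ (n k : ℕ) :
    ((n + 1).choose (k + 1) : F) = (n + 1) * n.choose k / (k + 1) := by
  rw [eq_div_iff k.cast_add_one_ne_zero]
  exact_mod_cast (Nat.add_one_mul_choose_eq n k).symm

end ChooseCast

theorem Nat.choose_sq_recurrence (m j : ℕ) :
    ((m : ℤ) + 2) * (m + 2).choose (j + 2) ^ 2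
      + ((m : ℤ) + 1) * (m.choose (j + 2) ^ 2 - 2 * m.choose (j + 1) ^ 2 + m.choose j ^ 2)
      = (2 * m + 3) * ((m + 1).choose (j + 2) ^ 2 + (m + 1).choose (j + 1) ^ 2) := by
  -- every coefficient is a rational multiple of `m.choose j`
  qify
  rw [Nat.cast_succ_choose_succ (m + 1) (j + 1), Nat.cast_choose_succ_right (m + 1) (j + 1),
    Nat.cast_succ_choose_succ m j, Nat.cast_choose_succ_right m (j + 1),
    Nat.cast_choose_succ_right m j]
  field_simp
  push_cast
  ring

theorem IsCoprime.of_mul_eq_mul_sub_mul {R : Type*} [CommRing R] {a b c x y z : R}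
    (ha : IsUnit a) (h : a * z = b * y - c * x) (hyc : IsCoprime y c) (hyx : IsCoprime y x) :
    IsCoprime z y := by
  have hyaz : IsCoprime y (a * z) := by
    rw [h, IsCoprime.mul_sub_right_right_iff]
    exact hyc.mul_right hyx
  exact ((isCoprime_mul_unit_left_right ha y z).mp hyaz).symm

theorem Polynomial.isCoprime_X_sub_C_of_not_isRoot {K : Type*} [Field K] {f : K[X]} {a : K}
    (h : ¬ f.IsRoot a) : IsCoprime (X - C a) f :=
  (irreducible_X_sub_C a).coprime_iff_not_dvd.mpr (by rwa [dvd_iff_isRoot])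

theorem CharP.natCast_ne_zero_of_lt (R : Type*) [AddMonoidWithOne R] {p : ℕ} [CharP R p]
    {k : ℕ} (h0 : 0 < k) (h : k < p) : (k : R) ≠ 0 :=
  (CharP.cast_eq_zero_iff R p k).not.mpr (Nat.not_dvd_of_pos_of_lt h0 h)

section Deuring

variable {R : Type*} [CommRing R]

theorem coeff_deuring (n i : ℕ) : (deuring R n).coeff i = (n.choose i : R) ^ 2 := by
  simp only [deuring, finsetSum_coeff, coeff_C_mul_X_pow, Finset.sum_ite_eq, Finset.mem_range]
  split_ifs with h
  · rfl
  · rw [Nat.choose_eq_zero_of_lt (by omega), Nat.cast_zero, zero_pow two_ne_zero]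

theorem deuring_zero : deuring R 0 = 1 := by
  simp [deuring]

theorem eval_one_deuring (n : ℕ) : (deuring R n).eval 1 = ((2 * n).choose n : R) := by
  simp [deuring, eval_finsetSum, ← Nat.sum_range_choose_sq]

theorem deuring_recurrence (m : ℕ) :
    C ((m + 2 : ℕ) : R) * deuring R (m + 2) =
      C ((2 * m + 3 : ℕ) : R) * (1 + X) * deuring R (m + 1)
        - C ((m + 1 : ℕ) : R) * (X - 1) ^ 2 * deuring R m := by
  have hsq : C ((m + 1 : ℕ) : R) * (X - 1) ^ 2 * deuring R m = C ((m + 1 : ℕ) : R) *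
      (X ^ 2 * deuring R m - X * deuring R m - X * deuring R m + deuring R m) := by ring
  rw [hsq, mul_assoc, add_mul, one_mul]
  ext (_ | _ | j)
  · simp only [coeff_sub, coeff_add, coeff_C_mul, coeff_X_mul_zero, coeff_X_pow_mul',
      coeff_deuring]
    norm_num
    ring
  · simp only [coeff_sub, coeff_add, coeff_C_mul, coeff_X_mul, coeff_X_pow_mul', coeff_deuring]
    norm_num
    ring
  · simp only [coeff_sub, coeff_add, coeff_C_mul, coeff_X_mul, coeff_X_pow_mul', coeff_deuring]
    have h := congrArg (Int.cast : ℤ → R) (Nat.choose_sq_recurrence m j)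
    push_cast at h ⊢
    linear_combination h

end Deuring

section CharP

variable {p : ℕ} {K : Type*} [Field K] [CharP K p]

theorem eval_one_deuring_ne_zero (hp : p.Prime) {n : ℕ} (hn : 2 * n < p) :
    (deuring K n).eval 1 ≠ 0 := by
  rw [eval_one_deuring, Ne, CharP.cast_eq_zero_iff K p, ← hp.coprime_iff_not_dvd]
  exact hp.coprime_choose_of_lt hn (by omega)

theorem isCoprime_deuring_succ (hp : p.Prime) : ∀ {n : ℕ}, 2 * (n + 1) < p →
    IsCoprime (deuring K (n + 1)) (deuring K n)
  | 0, _ => by rw [deuring_zero]; exact isCoprime_one_right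
  | n + 1, hn => by
    have hunit (k : ℕ) (h0 : 0 < k) (hk : k < p) : IsUnit (C (k : K)) :=
      isUnit_C.mpr (CharP.natCast_ne_zero_of_lt K h0 hk).isUnit
    have hX : IsCoprime (deuring K (n + 1)) (X - 1) := by
      simpa only [C_1] using
        (isCoprime_X_sub_C_of_not_isRoot (eval_one_deuring_ne_zero hp (by omega))).symm
    refine .of_mul_eq_mul_sub_mul (hunit (n + 2) (by omega) (by omega)) (deuring_recurrence n)
      ((isCoprime_mul_unit_left_right (hunit (n + 1) (by omega) (by omega)) _ _).mpr hX.pow_right)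
      (isCoprime_deuring_succ hp (by omega))

end CharP

theorem deuring_coprime_pred (p : ℕ) (hp : p.Prime) (n : ℕ) (hn0 : 0 < n) (hn : 2 * n < p)
    (K : Type*) [Field K] [CharP K p] :
    IsCoprime (deuring K n) (deuring K (n - 1)) := by
  obtain ⟨k, rfl⟩ := Nat.exists_eq_add_one_of_ne_zero hn0.ne'
  exact isCoprime_deuring_succ hp hn
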